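/- For every integer p ≥ 1 and every real number x, the following identity holds in the ring of formal power series ℝ⟦t⟧: Σ_{n=0}^∞ F_n^p(x)·t^n/n! = (1 − x·σ^p)^{−1}, where the right-hand side is the multiplicative inverse of the power series 1 − x·σ^p (which exists since σ^p has zero constant term). -/

import Mathlib

/-- Stirling numbers of the second kind. -/
def S2 : ℕ → ℕ → ℕ
  | 0, 0 => 1
  | 0, _ + 1 => 0
  | _ + 1, 0 => 0
  | n + 1, m + 1 => (m + 1) * S2 n (m + 1) + S2 n m

/-- Entries `S^p_{n,m}` of the `p`-th power of the Stirling matrix (for `p ≥ 1`;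
the value at `p = 0` is junk). -/
def Sp : ℕ → ℕ → ℕ → ℕ
  | 0, _, _ => 0
  | 1, n, m => S2 n m
  | p + 2, n, m => ∑ k ∈ Finset.range (n + 1), S2 n k * Sp (p + 1) k m

/-- Composition `f ∘ g` of formal power series (the intended meaning when `g` has zero
constant term, in which case `coeff n (g ^ k) = 0` for `k > n`). -/
noncomputable def PSComp (f g : PowerSeries ℝ) : PowerSeries ℝ :=
  PowerSeries.mk fun n =>
    ∑ k ∈ Finset.range (n + 1), (PowerSeries.coeff k f) * (PowerSeries.coeff n (g ^ k))

/-- `σ^p`, the `p`-fold compositional iterate of `exp X - 1` (with `σ^0 = X`). -/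
noncomputable def sigmaP : ℕ → PowerSeries ℝ
  | 0 => PowerSeries.X
  | p + 1 => PSComp (sigmaP p) (PowerSeries.exp ℝ - 1)
/-- Higher order Fubini polynomials: `F_n^p(x) = ∑_{m=0}^n S^p_{n,m} m! x^m`. -/
noncomputable def FubPoly (p n : ℕ) (x : ℝ) : ℝ :=
  ∑ m ∈ Finset.range (n + 1), (Sp p n m : ℝ) * m.factorial * x ^ m

/-! Composition with a series of zero constant term is Mathlib's `PowerSeries.subst`, a ring
homomorphism, so `(σ^{p+1})^m = (σ^p)^m ∘ (exp t - 1)`. Differentiating `(exp t - 1)^m` gives the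
Stirling recurrence for its coefficients, i.e. `[tⁿ] (exp t - 1)^m = S(n,m) m!/n!`, and induction
on `p` yields `[tⁿ] (σ^p)^m = S^p_{n,m} m!/n!`. Finally `(1 - x σ^p)⁻¹` is the substitution of
`x σ^p` into the geometric series `Σ tᵐ`, whose `n`-th coefficient is `Σ_m xᵐ [tⁿ] (σ^p)^m`. -/

open PowerSeries Finset

section Substitution

variable {R : Type*} [CommRing R]

theorem PowerSeries.coeff_pow_eq_zero_of_lt {g : R⟦X⟧} (hg : constantCoeff g = 0) {n k : ℕ}
    (h : n < k) : coeff n (g ^ k) = 0 :=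
  coeff_of_lt_order n <| (Nat.cast_lt.mpr h).trans_le (le_order_pow_of_constantCoeff_eq_zero k hg)

theorem PowerSeries.coeff_subst_eq_sum_range {g : R⟦X⟧} (hg : constantCoeff g = 0)
    (f : R⟦X⟧) (n : ℕ) :
    coeff n (f.subst g) = ∑ k ∈ range (n + 1), coeff k f * coeff n (g ^ k) := by
  rw [coeff_subst' (HasSubst.of_constantCoeff_zero' hg)]
  refine finsum_eq_sum_of_support_subset _ fun k hk => ?_
  by_contra hkn
  exact hk (by simp [coeff_pow_eq_zero_of_lt hg (by simpa using hkn : n < k)])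

theorem PowerSeries.inv_one_sub_eq_mk {K : Type*} [Field K] {g : K⟦X⟧}
    (hg : constantCoeff g = 0) :
    (1 - g)⁻¹ = mk fun n => ∑ m ∈ range (n + 1), coeff n (g ^ m) := by
  have hsub := HasSubst.of_constantCoeff_zero' hg
  have hgeom : (mk fun n => ∑ m ∈ range (n + 1), coeff n (g ^ m)) = (mk 1 : K⟦X⟧).subst g := by
    ext n
    simp [coeff_subst_eq_sum_range hg]
  have hmul := congrArg (substAlgHom hsub) (mk_one_mul_one_sub_eq_one (S := K))
  rw [map_mul, map_sub, map_one, substAlgHom_X, coe_substAlgHom] at hmul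
  rw [hgeom, inv_eq_iff_mul_eq_one (by simp [hg])]
  exact hmul

end Substitution

section Stirling

variable {K : Type*} [Field K] [CharZero K]

theorem constantCoeff_exp_sub_one : constantCoeff (exp K - 1) = 0 := by
  simp [constantCoeff_exp]

theorem derivative_exp_sub_one_pow_succ (m : ℕ) :
    d⁄dX K ((exp K - 1) ^ (m + 1)) =
      (m + 1) • ((exp K - 1) ^ (m + 1) + (exp K - 1) ^ m) := by
  rw [Derivation.leibniz_pow, map_sub, derivative_exp, Derivation.map_one_eq_zero, sub_zero,
    Nat.add_sub_cancel, smul_eq_mul]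
  ring

theorem coeff_exp_sub_one_pow (n m : ℕ) :
    coeff n ((exp K - 1) ^ m) = (S2 n m : K) * m.factorial / n.factorial := by
  induction n generalizing m with
  | zero =>
    cases m with
    | zero => simp [S2]
    | succ m => simp [coeff_pow_eq_zero_of_lt constantCoeff_exp_sub_one, S2]
  | succ n ih =>
    cases m with
    | zero => simp [coeff_one, S2]
    | succ m =>
      have h := coeff_derivative ((exp K - 1) ^ (m + 1)) n
      rw [derivative_exp_sub_one_pow_succ, map_nsmul, nsmul_eq_mul, map_add, ih, ih] at h
      rw [show S2 (n + 1) (m + 1) = (m + 1) * S2 n (m + 1) + S2 n m from rfl]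
      push_cast [Nat.factorial_succ] at h ⊢
      field_simp
      linear_combination -h

end Stirling

theorem PSComp_eq_subst {g : ℝ⟦X⟧} (hg : constantCoeff g = 0) (f : ℝ⟦X⟧) :
    PSComp f g = f.subst g := by
  ext n
  rw [coeff_subst_eq_sum_range hg, PSComp, coeff_mk]

theorem sigmaP_succ (p : ℕ) : sigmaP (p + 1) = (sigmaP p).subst (exp ℝ - 1) :=
  PSComp_eq_subst constantCoeff_exp_sub_one _

theorem sigmaP_one : sigmaP 1 = exp ℝ - 1 := by
  rw [sigmaP_succ, sigmaP, subst_X (HasSubst.of_constantCoeff_zero' constantCoeff_exp_sub_one)]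

theorem constantCoeff_sigmaP (p : ℕ) : constantCoeff (sigmaP p) = 0 := by
  induction p with
  | zero => simp [sigmaP]
  | succ p ih =>
    rw [← coeff_zero_eq_constantCoeff_apply, sigmaP_succ,
      coeff_subst_eq_sum_range constantCoeff_exp_sub_one]
    simp [ih]

theorem Sp_succ {p : ℕ} (hp : 1 ≤ p) (n m : ℕ) :
    Sp (p + 1) n m = ∑ k ∈ range (n + 1), S2 n k * Sp p k m := by
  obtain ⟨q, rfl⟩ := Nat.exists_eq_add_of_le' hp
  rfl

theorem coeff_sigmaP_pow {p : ℕ} (hp : 1 ≤ p) (n m : ℕ) :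
    coeff n (sigmaP p ^ m) = (Sp p n m : ℝ) * m.factorial / n.factorial := by
  induction p, hp using Nat.le_induction generalizing n m with
  | base => rw [sigmaP_one, coeff_exp_sub_one_pow]; rfl
  | succ p hp ih =>
    rw [sigmaP_succ, ← subst_pow (HasSubst.of_constantCoeff_zero' constantCoeff_exp_sub_one),
      coeff_subst_eq_sum_range constantCoeff_exp_sub_one, Sp_succ hp]
    push_cast
    rw [sum_mul, sum_div]
    refine sum_congr rfl fun k _ => ?_
    rw [ih, coeff_exp_sub_one_pow]
    field_simp

/-- The EGF of the higher order Fubini polynomials is `(1 - x σ^p)⁻¹`. -/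
theorem egf_fubini (p : ℕ) (hp : 1 ≤ p) (x : ℝ) :
    (PowerSeries.mk fun n => FubPoly p n x / n.factorial) =
      (1 - PowerSeries.C x * sigmaP p)⁻¹ := by
  rw [inv_one_sub_eq_mk (by simp [constantCoeff_sigmaP])]
  ext n
  simp only [coeff_mk, FubPoly, sum_div, mul_pow, ← map_pow, coeff_C_mul, coeff_sigmaP_pow hp]
  refine sum_congr rfl fun m _ => by ring
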